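/- arXiv:1410.2700 — 2 statements merged into one kernel-verified Lean document; each statement's English description precedes it below -/
import Mathlib

section
/- Second diskcyclicity criterion: Let T be a bounded operator on a separable Hilbert space H. Suppose there exist an increasing sequence {n_k} of integers and dense sets D₁, D₂ ⊆ H such that (a) for each y ∈ D₂ there is a sequence {x_k} in H with x_k → 0 and T^{n_k} x_k → y, and (b) ‖T^{n_k} x‖·‖x_k‖ → 0 for all x ∈ D₁ (with x_k as in (a)). Then T is diskcyclic. -/
open Filter Topology Pointwise

/-- The disk orbit of `x` under `T`: `{α • Tⁿ x : n ≥ 0, α ∈ ℂ, |α| ≤ 1}`. -/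
def diskOrbit {H : Type*} [NormedAddCommGroup H] [NormedSpace ℂ H]
    (T : H →L[ℂ] H) (x : H) : Set H :=
  {y | ∃ (n : ℕ) (α : ℂ), ‖α‖ ≤ 1 ∧ y = α • (T ^ n) x}

/-- An operator is diskcyclic if some vector has dense disk orbit. -/
def DiskCyclic {H : Type*} [NormedAddCommGroup H] [NormedSpace ℂ H]
    (T : H →L[ℂ] H) : Prop :=
  ∃ x : H, Dense (diskOrbit T x)

/-!
Given `x ∈ D₁` near a point of `U` and `y ∈ D₂` near a point of `V`, put `z_k = x + α_k⁻¹ x_k`,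
so that `α_k T^{n_k} z_k = α_k T^{n_k} x + T^{n_k} x_k`. For `α_k = (‖x_k‖ / (1 + ‖T^{n_k} x‖))^{1/2}`
both `α_k ‖T^{n_k} x‖` and `‖α_k⁻¹ x_k‖` are at most `(‖x_k‖ (1 + ‖T^{n_k} x‖))^{1/2}`, which tends
to `0` by (a) and (b), and `α_k ≤ 1` eventually; hence `z_k → x` and `α_k T^{n_k} z_k → y`.
So every open `U` contains a point whose disk orbit meets a given open `V`, and the Baire category
theorem over a countable basis yields a vector whose disk orbit meets every basic open set.
-/

open TopologicalSpace

lemma exists_smul_tendsto_zero_of_norm_mul_norm_tendsto_zero {ι E F : Type*} {l : Filter ι}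
    [NormedAddCommGroup E] [NormedSpace ℂ E] [NormedAddCommGroup F] [NormedSpace ℂ F]
    {a : ι → E} {w : ι → F}
    (hw : Tendsto w l (𝓝 0)) (haw : Tendsto (fun k => ‖a k‖ * ‖w k‖) l (𝓝 0)) :
    ∃ (α : ι → ℂ) (v : ι → F), (∀ᶠ k in l, ‖α k‖ ≤ 1) ∧
      Tendsto (fun k => α k • a k) l (𝓝 0) ∧ Tendsto v l (𝓝 0) ∧ ∀ k, α k • v k = w k := by
  set s : ι → ℝ := fun k => √‖w k‖
  set r : ι → ℝ := fun k => √(1 + ‖a k‖)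
  have hr : ∀ k, 0 < r k := fun k => Real.sqrt_pos.2 (by positivity)
  have hs_sq : ∀ k, s k ^ 2 = ‖w k‖ := fun k => Real.sq_sqrt (norm_nonneg _)
  have hr_sq : ∀ k, r k ^ 2 = 1 + ‖a k‖ := fun k => Real.sq_sqrt (by positivity)
  have hsr : Tendsto (fun k => s k * r k) l (𝓝 0) := by
    have h := (hw.norm.add haw).sqrt
    simp only [norm_zero, add_zero, Real.sqrt_zero] at h
    refine h.congr fun k => ?_
    rw [← Real.sqrt_mul (norm_nonneg _)]
    ring_nf
  refine ⟨fun k => ((s k / r k : ℝ) : ℂ), fun k => ((r k / s k : ℝ) : ℂ) • w k, ?_, ?_, ?_, ?_⟩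
  · filter_upwards [hw.norm.eventually (ge_mem_nhds (by norm_num : ‖(0 : F)‖ < 1))] with k hk
    rw [Complex.norm_real, Real.norm_of_nonneg (by positivity [hr k]), div_le_one (hr k)]
    exact (Real.sqrt_le_one.2 (by simpa using hk)).trans
      (Real.one_le_sqrt.2 (by linarith [norm_nonneg (a k)]))
  · refine squeeze_zero_norm (fun k => ?_) hsr
    rw [norm_smul, Complex.norm_real, Real.norm_of_nonneg (by positivity [hr k])]
    calc s k / r k * ‖a k‖ ≤ s k / r k * r k ^ 2 := by
          gcongr; rw [hr_sq]; linarith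
      _ = s k * r k := by field_simp [(hr k).ne']
  · refine squeeze_zero_norm (fun k => le_of_eq ?_) hsr
    rw [norm_smul, Complex.norm_real, Real.norm_of_nonneg (by positivity [hr k]), ← hs_sq]
    rcases eq_or_ne (s k) 0 with h | h
    · simp [h]
    · field_simp
  · intro k
    rcases eq_or_ne (s k) 0 with h | h
    · have hwk : w k = 0 := by rw [← norm_eq_zero, ← hs_sq, h, sq, zero_mul]
      simp [hwk]
    · have h1 : s k / r k * (r k / s k) = 1 := by field_simp [(hr k).ne']
      simp only [smul_smul, ← Complex.ofReal_mul, h1, Complex.ofReal_one, one_smul]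

section Operator

variable {H : Type*} [NormedAddCommGroup H] [NormedSpace ℂ H]

def DiskTransitive (T : H →L[ℂ] H) : Prop :=
  ∀ U V : Set H, IsOpen U → U.Nonempty → IsOpen V → V.Nonempty →
    ∃ z ∈ U, (diskOrbit T z ∩ V).Nonempty

lemma exists_tendsto_smul_apply {ι : Type*} {l : Filter ι} (S : ι → H →L[ℂ] H) {x y : H}
    {w : ι → H} (hw : Tendsto w l (𝓝 0)) (hSw : Tendsto (fun k => S k (w k)) l (𝓝 y))
    (hxw : Tendsto (fun k => ‖S k x‖ * ‖w k‖) l (𝓝 0)) :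
    ∃ (z : ι → H) (α : ι → ℂ), Tendsto z l (𝓝 x) ∧ (∀ᶠ k in l, ‖α k‖ ≤ 1) ∧
      Tendsto (fun k => α k • S k (z k)) l (𝓝 y) := by
  obtain ⟨α, v, hα, hαx, hv, hαv⟩ :=
    exists_smul_tendsto_zero_of_norm_mul_norm_tendsto_zero hw hxw
  refine ⟨fun k => x + v k, α, by simpa using tendsto_const_nhds.add hv, hα, ?_⟩
  have h := hαx.add hSw
  rw [zero_add] at h
  refine h.congr fun k => ?_
  rw [map_add, smul_add, ← (S k).map_smul (α k) (v k), hαv]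

lemma isOpen_setOf_diskOrbit_inter_nonempty (T : H →L[ℂ] H) {V : Set H} (hV : IsOpen V) :
    IsOpen {z | (diskOrbit T z ∩ V).Nonempty} := by
  have h : {z | (diskOrbit T z ∩ V).Nonempty} =
      ⋃ (m : ℕ) (α : ℂ) (_ : ‖α‖ ≤ 1), (fun z => α • (T ^ m) z) ⁻¹' V := by
    ext z
    simp [diskOrbit, Set.Nonempty]
  rw [h]
  exact isOpen_iUnion fun m => isOpen_iUnion fun α => isOpen_iUnion fun _ =>
    hV.preimage ((T ^ m).continuous.const_smul α)

theorem DiskTransitive.diskCyclic [BaireSpace H] [SecondCountableTopology H] {T : H →L[ℂ] H}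
    (hT : DiskTransitive T) : DiskCyclic T := by
  have hB := isBasis_countableBasis H
  have hdense : Dense (⋂ V ∈ countableBasis H, {z | (diskOrbit T z ∩ V).Nonempty}) := by
    refine dense_biInter_of_isOpen
      (fun V hV => isOpen_setOf_diskOrbit_inter_nonempty T (hB.isOpen hV))
      (countable_countableBasis H) fun V hV => ?_
    refine dense_iff_inter_open.2 fun U hU hUne => hT U V hU hUne (hB.isOpen hV) ?_
    exact Set.nonempty_iff_ne_empty.2 fun h => empty_notMem_countableBasis H (h ▸ hV)
  obtain ⟨x, hx⟩ := hdense.nonempty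
  refine ⟨x, hB.dense_iff.2 fun V hV _ => ?_⟩
  rw [Set.inter_comm]
  exact Set.mem_iInter₂.1 hx V hV

theorem DiskTransitive.of_tendsto {ι : Type*} {l : Filter ι} [l.NeBot] (T : H →L[ℂ] H)
    (n : ι → ℕ) {D1 D2 : Set H} (hD1 : Dense D1) (hD2 : Dense D2) (xs : H → ι → H)
    (ha : ∀ y ∈ D2, Tendsto (xs y) l (𝓝 0) ∧ Tendsto (fun k => (T ^ n k) (xs y k)) l (𝓝 y))
    (hb : ∀ x ∈ D1, ∀ y ∈ D2, Tendsto (fun k => ‖(T ^ n k) x‖ * ‖xs y k‖) l (𝓝 0)) :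
    DiskTransitive T := by
  intro U V hU hUne hV hVne
  obtain ⟨x, hxD, hxU⟩ := hD1.exists_mem_open hU hUne
  obtain ⟨y, hyD, hyV⟩ := hD2.exists_mem_open hV hVne
  obtain ⟨z, α, hz, hα, hzy⟩ :=
    exists_tendsto_smul_apply (fun k => T ^ n k) (ha y hyD).1 (ha y hyD).2 (hb x hxD y hyD)
  obtain ⟨k, hzk, hαk, hk⟩ := ((hz.eventually_mem (hU.mem_nhds hxU)).and
    (hα.and (hzy.eventually_mem (hV.mem_nhds hyV)))).exists
  exact ⟨z k, hzk, _, ⟨n k, α k, hαk, rfl⟩, hk⟩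

end Operator

theorem stmt10_general {H : Type*} [NormedAddCommGroup H] [InnerProductSpace ℂ H] [CompleteSpace H]
    [TopologicalSpace.SeparableSpace H]
    (T : H →L[ℂ] H) (n : ℕ → ℕ)
    (D1 D2 : Set H) (hD1 : Dense D1) (hD2 : Dense D2)
    (xs : H → ℕ → H)
    (ha : ∀ y ∈ D2, Filter.Tendsto (xs y) Filter.atTop (nhds 0) ∧
      Filter.Tendsto (fun k => (T ^ n k) (xs y k)) Filter.atTop (nhds y))
    (hb : ∀ x ∈ D1, ∀ y ∈ D2,
      Filter.Tendsto (fun k => ‖(T ^ n k) x‖ * ‖xs y k‖) Filter.atTop (nhds 0)) :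
    DiskCyclic T :=
  (DiskTransitive.of_tendsto T n hD1 hD2 xs ha hb).diskCyclic

theorem stmt10 {H : Type*} [NormedAddCommGroup H] [InnerProductSpace ℂ H] [CompleteSpace H]
    [TopologicalSpace.SeparableSpace H]
    (T : H →L[ℂ] H) (n : ℕ → ℕ) (hn : StrictMono n)
    (D1 D2 : Set H) (hD1 : Dense D1) (hD2 : Dense D2)
    (xs : H → ℕ → H)
    (ha : ∀ y ∈ D2, Filter.Tendsto (xs y) Filter.atTop (nhds 0) ∧
      Filter.Tendsto (fun k => (T ^ n k) (xs y k)) Filter.atTop (nhds y))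
    (hb : ∀ x ∈ D1, ∀ y ∈ D2,
      Filter.Tendsto (fun k => ‖(T ^ n k) x‖ * ‖xs y k‖) Filter.atTop (nhds 0)) :
    DiskCyclic T :=
  stmt10_general T n D1 D2 hD1 hD2 xs ha hb
end

section
/- A unilateral backward weighted shift B on ℓ²(ℕ) with positive weight sequence {w_n} is diskcyclic if and only if lim sup_{n→∞} (w₁ w₂ ⋯ w_n) = ∞. -/
/-!
If the products `P n = w 1 ⋯ w n` are bounded by `M`, the zeroth coordinate of `α • Bⁿ x` is
`α * P n * x n`, of modulus at most `M * ‖x‖`, so the disk orbit of `x` stays away from large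
multiples of `e₀`.

Conversely, when `P` is unbounded, `B` is topologically transitive. For `u`, `v` supported in
`[0, m)` pick `N = n + m ≥ 2m` with `P N` large and set
`z = u + ∑_{j<m} v j / (w (j+1) ⋯ w (j+n)) e_{j+n}`. Then `Bⁿ z = v`, and `z` is close to `u`
because each product `w (j+1) ⋯ w (j+n)` is at least `P N / ‖B‖ ^ m` (every weight is at most
`‖B‖`). Birkhoff's transitivity theorem, i.e. Baire category in the separable space `ℓ²`, then
yields a vector whose orbit, a fortiori whose disk orbit, is dense.
-/

open Filter Topology Pointwise

open Finset
open scoped lp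

theorem exists_dense_orbit_of_transitive {X : Type*} [TopologicalSpace X] [BaireSpace X]
    [SecondCountableTopology X] [Nonempty X] {f : X → X} (hf : Continuous f)
    (htrans : ∀ U V : Set X, IsOpen U → U.Nonempty → IsOpen V → V.Nonempty →
      ∃ n, (U ∩ f^[n] ⁻¹' V).Nonempty) :
    ∃ x, Dense (Set.range fun n => f^[n] x) := by
  obtain ⟨b, hbc, -, hb⟩ := TopologicalSpace.exists_countable_basis X
  let hits : Set X → Set X := fun V => ⋃ n, f^[n] ⁻¹' V
  have hopen : ∀ V ∈ {V ∈ b | V.Nonempty}, IsOpen (hits V) := fun V hV =>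
    isOpen_iUnion fun n => (hb.isOpen hV.1).preimage (hf.iterate n)
  have hdense : ∀ V ∈ {V ∈ b | V.Nonempty}, Dense (hits V) := by
    refine fun V hV => dense_iff_inter_open.mpr fun U hU hUne => ?_
    obtain ⟨n, hn⟩ := htrans U V hU hUne (hb.isOpen hV.1) hV.2
    exact hn.mono (Set.inter_subset_inter_right U (Set.subset_iUnion (fun n => f^[n] ⁻¹' V) n))
  obtain ⟨x, hx⟩ := (dense_biInter_of_isOpen hopen (hbc.mono fun V hV => hV.1) hdense).nonempty
  refine ⟨x, hb.dense_iff.mpr fun V hV hVne => ?_⟩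
  obtain ⟨n, hn⟩ := Set.mem_iUnion.mp (Set.mem_iInter₂.mp hx V ⟨hV, hVne⟩)
  exact ⟨_, hn, n, rfl⟩

theorem exists_ge_lt_of_forall_exists_lt {f : ℕ → ℝ} (hf : ∀ M, ∃ n, M < f n) (M : ℝ) (N : ℕ) :
    ∃ n ≥ N, M < f n := by
  obtain ⟨c, hc⟩ := ((Set.finite_Iio N).image f).bddAbove
  obtain ⟨n, hn⟩ := hf (max M c)
  refine ⟨n, not_lt.mp fun hnN => ?_, (le_max_left M c).trans_lt hn⟩
  exact (hc ⟨n, hnN, rfl⟩).not_gt ((le_max_right M c).trans_lt hn)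

theorem prod_range_add_le_pow_mul {f : ℕ → ℝ} {C : ℝ} (hf : ∀ k, 0 ≤ f k) (hfC : ∀ k, f k ≤ C)
    {j m : ℕ} (hjm : j ≤ m) (n : ℕ) :
    ∏ k ∈ range (n + m), f k ≤ C ^ m * ∏ k ∈ range n, f (j + k) := by
  have hprod_le : ∀ (g : ℕ → ℕ) (l : ℕ), ∏ k ∈ range l, f (g k) ≤ C ^ l := fun g l =>
    (prod_le_prod (fun k _ => hf _) fun k _ => hfC _).trans_eq (by rw [prod_const, card_range])
  have hsplit : n + m = j + n + (m - j) := by omega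
  rw [hsplit, prod_range_add, prod_range_add]
  calc (∏ k ∈ range j, f k) * (∏ k ∈ range n, f (j + k)) * ∏ k ∈ range (m - j), f (j + n + k)
      ≤ C ^ j * (∏ k ∈ range n, f (j + k)) * C ^ (m - j) := by
        have hnonneg : ∀ (g : ℕ → ℕ) (l : ℕ), 0 ≤ ∏ k ∈ range l, f (g k) := fun g l =>
          prod_nonneg fun k _ => hf _
        have hC : 0 ≤ C := (hf 0).trans (hfC 0)
        exact mul_le_mul (mul_le_mul_of_nonneg_right (hprod_le id j) (hnonneg _ n))
          (hprod_le _ _) (hnonneg _ _) (mul_nonneg (pow_nonneg hC j) (hnonneg _ n))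
    _ = C ^ m * ∏ k ∈ range n, f (j + k) := by
        rw [mul_right_comm, ← pow_add, Nat.add_sub_cancel' hjm]

def weightProd (w : ℕ → ℝ) (j n : ℕ) : ℝ := ∏ k ∈ range n, w (j + k + 1)

theorem weightProd_zero_left (w : ℕ → ℝ) (n : ℕ) :
    weightProd w 0 n = ∏ k ∈ range n, w (k + 1) := by
  simp only [weightProd, zero_add]

theorem weightProd_pos {w : ℕ → ℝ} (hw : ∀ n, 0 < w n) (j n : ℕ) : 0 < weightProd w j n :=
  prod_pos fun _ _ => hw _

noncomputable def truncate (m : ℕ) (x : ℓ²(ℕ, ℂ)) : ℓ²(ℕ, ℂ) :=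
  ∑ i ∈ range m, lp.single 2 i (x i)

theorem tendsto_truncate (x : ℓ²(ℕ, ℂ)) : Tendsto (truncate · x) atTop (𝓝 x) :=
  (lp.hasSum_single ENNReal.ofNat_ne_top x).tendsto_sum_nat

theorem truncate_mem_span (m : ℕ) (x : ℓ²(ℕ, ℂ)) :
    truncate m x ∈ Submodule.span ℂ (Set.range fun i => (lp.single 2 i 1 : ℓ²(ℕ, ℂ))) := by
  refine Submodule.sum_mem _ fun i _ => ?_
  have : lp.single 2 i (x i) = x i • (lp.single 2 i 1 : ℓ²(ℕ, ℂ)) := by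
    rw [← lp.single_smul, smul_eq_mul, mul_one]
  exact this ▸ Submodule.smul_mem _ _ (Submodule.subset_span ⟨i, rfl⟩)

instance : TopologicalSpace.SeparableSpace ℓ²(ℕ, ℂ) := by
  refine TopologicalSpace.isSeparable_univ_iff.mp ?_
  have hspan :=
    (Set.countable_range fun i => (lp.single 2 i 1 : ℓ²(ℕ, ℂ))).isSeparable.span (R := ℂ)
  refine hspan.closure.mono fun x _ => mem_closure_of_tendsto (tendsto_truncate x) ?_
  exact Eventually.of_forall fun m => truncate_mem_span m x

theorem norm_sum_single_div_weightProd_le {w : ℕ → ℝ} {C : ℝ} (hw : ∀ n, 0 < w n)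
    (hwC : ∀ n, w (n + 1) ≤ C) (v : ℕ → ℂ) (n m : ℕ) :
    ‖∑ j ∈ range m, (lp.single 2 (j + n) (v j / weightProd w j n) : ℓ²(ℕ, ℂ))‖
      ≤ C ^ m * (∑ j ∈ range m, ‖v j‖) / weightProd w 0 (n + m) := by
  have hP := weightProd_pos hw 0 (n + m)
  have hterm : ∀ j ∈ range m, ‖(lp.single 2 (j + n) (v j / weightProd w j n) : ℓ²(ℕ, ℂ))‖
      ≤ ‖v j‖ * C ^ m / weightProd w 0 (n + m) := by
    intro j hj
    have hq := weightProd_pos hw j n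
    have hPq : weightProd w 0 (n + m) ≤ C ^ m * weightProd w j n := by
      simpa only [weightProd, zero_add, add_right_comm _ _ 1] using
        prod_range_add_le_pow_mul (fun k => (hw (k + 1)).le) hwC (mem_range.mp hj).le n
    rw [lp.norm_single two_pos, norm_div, Complex.norm_real, Real.norm_of_nonneg hq.le,
      div_le_div_iff₀ hq hP, mul_assoc]
    exact mul_le_mul_of_nonneg_left hPq (norm_nonneg _)
  calc _ ≤ ∑ j ∈ range m, ‖(lp.single 2 (j + n) (v j / weightProd w j n) : ℓ²(ℕ, ℂ))‖ :=
        norm_sum_le _ _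
    _ ≤ ∑ j ∈ range m, ‖v j‖ * C ^ m / weightProd w 0 (n + m) := sum_le_sum hterm
    _ = C ^ m * (∑ j ∈ range m, ‖v j‖) / weightProd w 0 (n + m) := by
        rw [← sum_div, ← sum_mul, mul_comm]

def IsBackwardWeightedShift (w : ℕ → ℝ) (B : ℓ²(ℕ, ℂ) →L[ℂ] ℓ²(ℕ, ℂ)) : Prop :=
  ∀ (x : ℓ²(ℕ, ℂ)) (n : ℕ), B x n = w (n + 1) * x (n + 1)

namespace IsBackwardWeightedShift

variable {w : ℕ → ℝ} {B : ℓ²(ℕ, ℂ) →L[ℂ] ℓ²(ℕ, ℂ)} (hB : IsBackwardWeightedShift w B)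
include hB

theorem pow_apply (n : ℕ) (x : ℓ²(ℕ, ℂ)) (j : ℕ) :
    (B ^ n) x j = weightProd w j n * x (j + n) := by
  induction n generalizing x j with
  | zero => simp [weightProd]
  | succ n ih =>
    rw [pow_succ, mul_apply_eq_comp, ih, hB, weightProd, weightProd,
      prod_range_succ, ← add_assoc j n 1]
    push_cast
    ring

theorem weight_le_opNorm (n : ℕ) : w (n + 1) ≤ ‖B‖ := by
  have hBe : B (lp.single 2 (n + 1) 1) n = w (n + 1) := by
    rw [hB, lp.single_apply_self, mul_one]
  calc w (n + 1) ≤ ‖(w (n + 1) : ℂ)‖ := by rw [Complex.norm_real]; exact le_abs_self _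
    _ = ‖B (lp.single 2 (n + 1) 1) n‖ := by rw [hBe]
    _ ≤ ‖B (lp.single 2 (n + 1) 1)‖ := lp.norm_apply_le_norm two_ne_zero _ _
    _ ≤ ‖B‖ := by
        simpa [lp.norm_single] using B.le_opNorm (lp.single 2 (n + 1) 1)

theorem pow_single_of_lt {i n : ℕ} (hin : i < n) (a : ℂ) :
    (B ^ n) (lp.single 2 i a) = 0 := by
  refine lp.ext (funext fun j => ?_)
  rw [hB.pow_apply, lp.single_apply_ne _ _ _ (by omega), mul_zero]
  rfl

theorem pow_single_add (j n : ℕ) (a : ℂ) :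
    (B ^ n) (lp.single 2 (j + n) a) = lp.single 2 j (weightProd w j n * a) := by
  refine lp.ext (funext fun i => ?_)
  rw [hB.pow_apply]
  by_cases hij : i = j
  · subst hij
    rw [lp.single_apply_self, lp.single_apply_self]
  · rw [lp.single_apply_ne _ _ _ hij, lp.single_apply_ne _ _ _ (by omega), mul_zero]

theorem pow_truncate_of_le {m n : ℕ} (hmn : m ≤ n) (x : ℓ²(ℕ, ℂ)) :
    (B ^ n) (truncate m x) = 0 := by
  rw [truncate, map_sum]
  exact sum_eq_zero fun i hi => hB.pow_single_of_lt ((mem_range.mp hi).trans_le hmn) _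

theorem pow_sum_single_div_weightProd (hw : ∀ n, 0 < w n) (v : ℓ²(ℕ, ℂ)) (n m : ℕ) :
    (B ^ n) (∑ j ∈ range m, lp.single 2 (j + n) (v j / weightProd w j n)) = truncate m v := by
  rw [map_sum, truncate]
  refine sum_congr rfl fun j _ => ?_
  rw [hB.pow_single_add,
    mul_div_cancel₀ _ (Complex.ofReal_ne_zero.mpr (weightProd_pos hw j n).ne')]

theorem norm_apply_zero_le_of_mem_diskOrbit (hw : ∀ n, 0 < w n) {M : ℝ}
    (hM : ∀ n, weightProd w 0 n ≤ M) {x y : ℓ²(ℕ, ℂ)} (hy : y ∈ diskOrbit B x) :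
    ‖y 0‖ ≤ M * ‖x‖ := by
  obtain ⟨n, α, hα, rfl⟩ := hy
  have hM0 : 0 ≤ M := (weightProd_pos hw 0 0).le.trans (hM 0)
  rw [lp.coeFn_smul, Pi.smul_apply, smul_eq_mul, hB.pow_apply, zero_add, norm_mul, norm_mul,
    Complex.norm_real, Real.norm_of_nonneg (weightProd_pos hw 0 n).le]
  calc ‖α‖ * (weightProd w 0 n * ‖x n‖) ≤ 1 * (M * ‖x‖) :=
        mul_le_mul hα (mul_le_mul (hM n) (lp.norm_apply_le_norm two_ne_zero x n)
          (norm_nonneg _) hM0)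
          (mul_nonneg (weightProd_pos hw 0 n).le (norm_nonneg _)) zero_le_one
    _ = M * ‖x‖ := one_mul _

theorem forall_exists_lt_prod_of_diskCyclic (hw : ∀ n, 0 < w n) (hcyc : DiskCyclic B) (M : ℝ) :
    ∃ n : ℕ, M < ∏ k ∈ range n, w (k + 1) := by
  by_contra! hM
  simp only [← weightProd_zero_left] at hM
  obtain ⟨x, hx⟩ := hcyc
  have hclosed : IsClosed {y : ℓ²(ℕ, ℂ) | ‖y 0‖ ≤ M * ‖x‖} :=
    isClosed_le (lp.evalCLM ℂ (fun _ : ℕ => ℂ) 2 0).continuous.norm continuous_const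
  have hmem : (lp.single 2 0 ((M * ‖x‖ + 1 : ℝ) : ℂ) : ℓ²(ℕ, ℂ)) ∈
      {y : ℓ²(ℕ, ℂ) | ‖y 0‖ ≤ M * ‖x‖} :=
    hclosed.closure_subset_iff.mpr (fun y hy => hB.norm_apply_zero_le_of_mem_diskOrbit hw hM hy)
      (hx.closure_eq ▸ Set.mem_univ _)
  have hM0 : 0 ≤ M * ‖x‖ := mul_nonneg ((weightProd_pos hw 0 0).le.trans (hM 0)) (norm_nonneg x)
  rw [Set.mem_ofPred_eq, lp.single_apply_self, Complex.norm_real,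
    Real.norm_of_nonneg (by linarith)] at hmem
  linarith

theorem exists_dist_lt_pow_dist_lt (hw : ∀ n, 0 < w n)
    (hP : ∀ M : ℝ, ∃ n : ℕ, M < ∏ k ∈ range n, w (k + 1)) (u v : ℓ²(ℕ, ℂ)) {ε : ℝ}
    (hε : 0 < ε) : ∃ (z : ℓ²(ℕ, ℂ)) (n : ℕ), dist z u < ε ∧ dist ((B ^ n) z) v < ε := by
  obtain ⟨m, hu, hv⟩ :=
    ((tendsto_truncate u).eventually (Metric.ball_mem_nhds u (half_pos hε))).and
      ((tendsto_truncate v).eventually (Metric.ball_mem_nhds v hε)) |>.exists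
  simp only [← weightProd_zero_left] at hP
  obtain ⟨N, hNm, hPN⟩ :=
    exists_ge_lt_of_forall_exists_lt hP (‖B‖ ^ m * (∑ j ∈ range m, ‖v j‖) / (ε / 2)) (2 * m)
  obtain ⟨n, rfl⟩ : ∃ n, N = n + m := ⟨N - m, by omega⟩
  -- `y` carries the first `m` coordinates of `v`, rescaled, at positions `n, …, n + m - 1`:
  -- `Bⁿ` maps it onto `truncate m v` and kills `truncate m u`, and it is small since
  -- `weightProd w 0 (n + m)` is large
  set y := ∑ j ∈ range m, (lp.single 2 (j + n) (v j / weightProd w j n) : ℓ²(ℕ, ℂ))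
  have hy : ‖y‖ < ε / 2 := by
    refine (norm_sum_single_div_weightProd_le hw hB.weight_le_opNorm v n m).trans_lt ?_
    rw [div_lt_iff₀ (weightProd_pos hw 0 (n + m))]
    rw [div_lt_iff₀ (half_pos hε)] at hPN
    linarith
  refine ⟨truncate m u + y, n, ?_, ?_⟩
  · calc dist (truncate m u + y) u
          ≤ dist (truncate m u + y) (truncate m u) + dist (truncate m u) u := dist_triangle _ _ _
      _ < ε / 2 + ε / 2 := by
          rw [dist_self_add_left]
          exact add_lt_add hy hu
      _ = ε := add_halves ε
  · rw [map_add, hB.pow_truncate_of_le (by omega), zero_add, hB.pow_sum_single_div_weightProd hw]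
    exact hv

theorem diskCyclic_of_forall_exists_lt_prod (hw : ∀ n, 0 < w n)
    (hP : ∀ M : ℝ, ∃ n : ℕ, M < ∏ k ∈ range n, w (k + 1)) : DiskCyclic B := by
  have htrans : ∀ U V : Set ℓ²(ℕ, ℂ), IsOpen U → U.Nonempty → IsOpen V → V.Nonempty →
      ∃ n, (U ∩ (⇑B)^[n] ⁻¹' V).Nonempty := by
    rintro U V hU ⟨u, hu⟩ hV ⟨v, hv⟩
    obtain ⟨ε, hε, huε⟩ := Metric.isOpen_iff.mp hU u hu
    obtain ⟨δ, hδ, hvδ⟩ := Metric.isOpen_iff.mp hV v hv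
    obtain ⟨z, n, hz, hnz⟩ := hB.exists_dist_lt_pow_dist_lt hw hP u v (lt_min hε hδ)
    refine ⟨n, z, huε (hz.trans_le (min_le_left _ _)), ?_⟩
    rw [Set.mem_preimage, ← FunLike.coe_pow_eq_iterate]
    exact hvδ (hnz.trans_le (min_le_right _ _))
  obtain ⟨x, hx⟩ := exists_dense_orbit_of_transitive B.continuous htrans
  refine ⟨x, hx.mono ?_⟩
  rintro _ ⟨n, rfl⟩
  exact ⟨n, 1, norm_one.le, by rw [one_smul, FunLike.coe_pow_eq_iterate]⟩

end IsBackwardWeightedShift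

theorem stmt17_general (w : ℕ → ℝ) (hw : ∀ n, 0 < w n)
    (B : lp (fun _ : ℕ => ℂ) 2 →L[ℂ] lp (fun _ : ℕ => ℂ) 2)
    (hB : ∀ (x : lp (fun _ : ℕ => ℂ) 2) (n : ℕ),
      (B x : ∀ _ : ℕ, ℂ) n = (w (n + 1) : ℂ) * (x : ∀ _ : ℕ, ℂ) (n + 1)) :
    DiskCyclic B ↔ ∀ M : ℝ, ∃ n : ℕ, M < ∏ k ∈ Finset.range n, w (k + 1) :=
  ⟨IsBackwardWeightedShift.forall_exists_lt_prod_of_diskCyclic hB hw,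
    IsBackwardWeightedShift.diskCyclic_of_forall_exists_lt_prod hB hw⟩

theorem stmt17 (w : ℕ → ℝ) (hw : ∀ n, 0 < w n) (hbdd : ∃ M : ℝ, ∀ n, w n ≤ M)
    (B : lp (fun _ : ℕ => ℂ) 2 →L[ℂ] lp (fun _ : ℕ => ℂ) 2)
    (hB : ∀ (x : lp (fun _ : ℕ => ℂ) 2) (n : ℕ),
      (B x : ∀ _ : ℕ, ℂ) n = (w (n + 1) : ℂ) * (x : ∀ _ : ℕ, ℂ) (n + 1)) :
    DiskCyclic B ↔ ∀ M : ℝ, ∃ n : ℕ, M < ∏ k ∈ Finset.range n, w (k + 1) :=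
  stmt17_general w hw B hB
end
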